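/- Let F₀ = ℚ(p, x₀, x₁, x₂, x₃). In the formal power series ring F₀[[X]] one has (1−x₀X)(1−x₀x₁x₂x₃X) · Σ_{δ≥0} ( Σ_{0≤δ₁≤δ₂≤δ₃≤δ} p^{3δ₁+2δ₂+δ₃} (x₁x₂x₃/p⁶)^{δ₁} ω(δ₂−δ₁, δ₃−δ₁) ) (x₀X)^δ = Σ_{μ≥0} ( Σ_{0≤λ≤μ} ω(λ,μ) p^{2λ+μ} ) (x₀X)^μ, i.e. the full generating series factors through the two-variable spherical sum after removing the factors (1−x₀X)⁻¹ and (1−x₀x₁x₂x₃X)⁻¹. -/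

import Mathlib

/-! Common setup: the field `F₀ = ℚ(p, x₀, x₁, x₂, x₃)`, realized as the fraction field of the
polynomial ring `ℚ[p, x₀, x₁, x₂, x₃]`.  `p` has index `0`, `x₀` has index `1`, and `x i`
(for `i : Fin 3`) are the variables `x₁, x₂, x₃`. -/

noncomputable section

/-- The rational function field `ℚ(p, x₀, x₁, x₂, x₃)`. -/
abbrev F₀ : Type := FractionRing (MvPolynomial (Fin 5) ℚ)

/-- The indeterminate `p`. -/
def p : F₀ := algebraMap (MvPolynomial (Fin 5) ℚ) F₀ (MvPolynomial.X 0)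

/-- The indeterminate `x₀`. -/
def x₀ : F₀ := algebraMap (MvPolynomial (Fin 5) ℚ) F₀ (MvPolynomial.X 1)

/-- The indeterminates `x₁, x₂, x₃` (as `x 0, x 1, x 2`). -/
def x (i : Fin 3) : F₀ := algebraMap (MvPolynomial (Fin 5) ℚ) F₀ (MvPolynomial.X i.succ.succ)

/-- The monomial symmetric polynomial `sym_{a,b,c}` in `x₁, x₂, x₃`: the sum of all *distinct*
monomials obtained from `x₁^a x₂^b x₃^c` by permuting the variables. -/
def sym (a b c : ℕ) : F₀ :=
  ∑ e ∈ Finset.univ.image (fun σ : Equiv.Perm (Fin 3) => (![a, b, c]) ∘ σ),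
    ∏ j, x j ^ e j

/-- Andrianov's formula for the Satake spherical image `ω(λ,μ) = ω(t(1, p^λ, p^μ))`
of the `GL₃` Hecke operator `t(1, p^λ, p^μ)`, for `0 ≤ λ ≤ μ`. -/
def ω (l m : ℕ) : F₀ :=
  ((if l = 0 ∧ m = 0 then p ^ 3 / ((p + 1) * (p ^ 2 + p + 1))
    else if l = 0 ∨ l = m then p / (p + 1)
    else 1) / p ^ (2 * l + m)) *
  ∑ σ : Equiv.Perm (Fin 3),
    x (σ 1) ^ l * x (σ 2) ^ m *
      ((x (σ 1) - x (σ 0) / p) * (x (σ 2) - x (σ 0) / p) * (x (σ 2) - x (σ 1) / p)) /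
      ((x (σ 1) - x (σ 0)) * (x (σ 2) - x (σ 0)) * (x (σ 2) - x (σ 1)))

/-- The polynomial `P(X)` (numerator of the Shimura/Andrianov generating series for `Sp₃`),
as a formal power series in `X` over `F₀`. -/
def P : PowerSeries F₀ :=
  1 - PowerSeries.C (R := F₀) ((sym 2 1 1 / p + (p ^ 2 + p + 1) * sym 1 1 1 / p ^ 2 + sym 1 1 0 / p)
        * x₀ ^ 2) * PowerSeries.X ^ 2
    + PowerSeries.C (R := F₀) (((p + 1) / p ^ 2) * (sym 2 2 2 + sym 2 2 1 + sym 2 1 1 + sym 1 1 1)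
        * x₀ ^ 3) * PowerSeries.X ^ 3
    - PowerSeries.C (R := F₀) ((sym 3 2 2 / p ^ 2 + (p ^ 2 + p + 1) * sym 2 2 2 / p ^ 3
        + sym 2 2 1 / p ^ 2) * x₀ ^ 4) * PowerSeries.X ^ 4
    + PowerSeries.C (R := F₀) ((sym 3 3 3 / p ^ 3) * x₀ ^ 6) * PowerSeries.X ^ 6

/-- The spherical image of the generating series `Σ_δ Ω(T(p^δ)) X^δ` of Hecke operators for
`Sp₃`: the coefficient of `X^δ` is
`Σ_{0 ≤ δ₁ ≤ δ₂ ≤ δ₃ ≤ δ} p^{3δ₁+2δ₂+δ₃} (x₁x₂x₃/p⁶)^{δ₁} ω(δ₂−δ₁, δ₃−δ₁) · x₀^δ`. -/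
def R : PowerSeries F₀ :=
  PowerSeries.mk fun δ =>
    (∑ d₃ ∈ Finset.range (δ + 1), ∑ d₂ ∈ Finset.range (d₃ + 1), ∑ d₁ ∈ Finset.range (d₂ + 1),
      p ^ (3 * d₁ + 2 * d₂ + d₃) * (x 0 * x 1 * x 2 / p ^ 6) ^ d₁ * ω (d₂ - d₁) (d₃ - d₁))
    * x₀ ^ δ

/-!
Write `y = x₁x₂x₃` and let `B n` be the layer `δ₃ = n` of the triple sum defining `R`. Shifting
`(δ₁, δ₂, δ₃)` to `(δ₁ + 1, δ₂ + 1, δ₃ + 1)` multiplies a summand by `y`, so splitting off the terms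
with `δ₁ = 0` gives `B (n + 1) = T (n + 1) + y · B n`, where `T μ = Σ_{λ ≤ μ} ω(λ,μ) p^{2λ+μ}`.
Hence `(1 - yX) Σ B n Xⁿ = Σ T μ X^μ`, and since the coefficients of `R` are the partial sums of
the `B n` (up to `x₀^δ`), `(1 - X) (1 - yX) Σ_δ (Σ_{n ≤ δ} B n) X^δ = Σ T μ X^μ`. Rescaling
`X ↦ x₀X` gives the theorem.
-/

namespace PowerSeries

theorem one_sub_C_mul_X_mul_mk {A : Type*} [CommRing A] (c : A) {a b : ℕ → A}
    (h_zero : a 0 = b 0) (h_succ : ∀ n, a (n + 1) = b (n + 1) + c * a n) :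
    (1 - C c * X) * mk a = mk b := by
  ext n
  cases n with
  | zero => simp [sub_mul, h_zero]
  | succ n => simp [sub_mul, mul_assoc, coeff_succ_X_mul, h_succ]

theorem one_sub_X_mul_mk_sum_range {A : Type*} [CommRing A] (a : ℕ → A) :
    (1 - X) * mk (fun n => ∑ i ∈ Finset.range (n + 1), a i) = mk a := by
  simpa using one_sub_C_mul_X_mul_mk (1 : A) (by simp)
    (fun n => by rw [Finset.sum_range_succ, add_comm, one_mul])

theorem rescale_C {A : Type*} [CommSemiring A] (a c : A) : rescale a (C c) = C c := by
  ext n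
  cases n <;> simp [coeff_rescale, coeff_C]

end PowerSeries

open PowerSeries
open Finset hiding mk

theorem p_ne_zero : p ≠ 0 :=
  (map_ne_zero_iff _ (IsFractionRing.injective _ _)).mpr (MvPolynomial.X_ne_zero 0)

def heckeTerm (d₁ d₂ d₃ : ℕ) : F₀ :=
  p ^ (3 * d₁ + 2 * d₂ + d₃) * (x 0 * x 1 * x 2 / p ^ 6) ^ d₁ * ω (d₂ - d₁) (d₃ - d₁)

def heckeLayer (n : ℕ) : F₀ :=
  ∑ d₂ ∈ range (n + 1), ∑ d₁ ∈ range (d₂ + 1), heckeTerm d₁ d₂ n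

def sphericalSum (μ : ℕ) : F₀ :=
  ∑ l ∈ range (μ + 1), ω l μ * p ^ (2 * l + μ)

theorem heckeTerm_zero_left (d₂ d₃ : ℕ) : heckeTerm 0 d₂ d₃ = ω d₂ d₃ * p ^ (2 * d₂ + d₃) := by
  simp [heckeTerm, mul_comm]

theorem heckeTerm_succ (d₁ d₂ d₃ : ℕ) :
    heckeTerm (d₁ + 1) (d₂ + 1) (d₃ + 1) = x 0 * x 1 * x 2 * heckeTerm d₁ d₂ d₃ := by
  have h_exp : 3 * (d₁ + 1) + 2 * (d₂ + 1) + (d₃ + 1) = 3 * d₁ + 2 * d₂ + d₃ + 6 := by ring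
  simp only [heckeTerm, h_exp, Nat.add_sub_add_right, pow_add, pow_succ]
  field_simp [p_ne_zero]

theorem heckeLayer_zero : heckeLayer 0 = sphericalSum 0 := by
  simp [heckeLayer, sphericalSum, heckeTerm_zero_left]

theorem heckeLayer_succ (n : ℕ) :
    heckeLayer (n + 1) = sphericalSum (n + 1) + x 0 * x 1 * x 2 * heckeLayer n := by
  simp only [heckeLayer, sum_range_succ' (fun d₁ => heckeTerm d₁ _ (n + 1)), sum_add_distrib,
    heckeTerm_zero_left]
  rw [add_comm, sphericalSum, sum_range_succ' (fun d₂ => ∑ d₁ ∈ range d₂, _)]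
  simp [heckeTerm_succ, mul_sum]

/-- in `F₀⟦X⟧`,
`(1−x₀X)(1−x₀x₁x₂x₃X) · Σ_δ Ω(T(p^δ)) X^δ = Σ_μ (Σ_{0≤λ≤μ} ω(λ,μ) p^{2λ+μ}) (x₀X)^μ`. -/
theorem two_factors_mul_heckeSeries :
    ((1 - PowerSeries.C (R := F₀) x₀ * PowerSeries.X)
      * (1 - PowerSeries.C (R := F₀) (x₀ * x 0 * x 1 * x 2) * PowerSeries.X)) * R
    = PowerSeries.mk fun μ =>
        (∑ l ∈ Finset.range (μ + 1), ω l μ * p ^ (2 * l + μ)) * x₀ ^ μ := by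
  have h_R : R = rescale x₀ (mk fun δ => ∑ n ∈ range (δ + 1), heckeLayer n) := by
    rw [R, rescale_mk]
    exact congrArg PowerSeries.mk (funext fun δ => mul_comm _ _)
  have h_factors : (1 - C x₀ * X) * (1 - C (x₀ * x 0 * x 1 * x 2) * X)
      = rescale x₀ ((1 - C (x 0 * x 1 * x 2) * X) * (1 - X)) := by
    simp only [map_mul, map_sub, map_one, rescale_X, rescale_C]
    ring
  rw [h_R, h_factors, ← map_mul, mul_assoc, one_sub_X_mul_mk_sum_range,
    one_sub_C_mul_X_mul_mk _ heckeLayer_zero heckeLayer_succ, rescale_mk]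
  exact congrArg PowerSeries.mk (funext fun μ => mul_comm _ _)
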